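/- arXiv:1211.2147 — 2 statements merged into one kernel-verified Lean document; each statement's English description precedes it below -/
import Mathlib

section
/- Let n be a superabundant number with largest prime factor p. Then ψ(p) ≤ log n, where ψ is the Chebyshev function ψ(x) = Σ_{p^m ≤ x} log p. -/
open Real Finset

noncomputable section

/-- Sum of divisors of `n`. -/
def sigma1 (n : ℕ) : ℕ := n.divisors.sum id

/-- `n` is superabundant if `σ(n)/n > σ(m)/m` for all positive `m < n`. -/
def Superabundant (n : ℕ) : Prop :=
  0 < n ∧ ∀ m : ℕ, 0 < m → m < n → (sigma1 m : ℝ) / m < (sigma1 n : ℝ) / n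

/-- Robin's quotient `f(n) = σ(n)/(n log log n)`. -/
def robinF (n : ℕ) : ℝ := (sigma1 n : ℝ) / (n * Real.log (Real.log n))

/-- `n` is extremely abundant. -/
def ExtremelyAbundant (n : ℕ) : Prop :=
  n = 10080 ∨ (10080 < n ∧ ∀ m : ℕ, 10080 ≤ m → m < n → robinF m < robinF n)

lemma sigma1_eq_sigma (k : ℕ) : sigma1 k = ArithmeticFunction.sigma 1 k := by
  simp [sigma1, ArithmeticFunction.sigma_one_apply]

lemma sigma1_mul {x y : ℕ} (h : Nat.Coprime x y) :
    sigma1 (x * y) = sigma1 x * sigma1 y := by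
  simp only [sigma1_eq_sigma]
  exact ArithmeticFunction.isMultiplicative_sigma.map_mul_of_coprime h

lemma sigma1_prime_pow {q : ℕ} (hq : q.Prime) (k : ℕ) :
    sigma1 (q ^ k) = ∑ i ∈ Finset.range (k + 1), q ^ i := by
  simp [sigma1_eq_sigma, ArithmeticFunction.sigma_one_apply,
    Nat.sum_divisors_prime_pow hq]

lemma sigma1_pos {k : ℕ} (hk : 0 < k) : 0 < sigma1 k := by
  have h := Finset.single_le_sum (f := (id : ℕ → ℕ)) (fun i _ => Nat.zero_le i)
    (Nat.mem_divisors_self k hk.ne')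
  exact lt_of_lt_of_le hk h

lemma sigma1_prime_pow_succ {p : ℕ} (hp : p.Prime) (b : ℕ) :
    sigma1 (p ^ (b + 1)) = p * sigma1 (p ^ b) + 1 := by
  rw [sigma1_prime_pow hp, sigma1_prime_pow hp, geom_sum_succ]

lemma sigma1_prime_pow_double {q : ℕ} (hq : q.Prime) (a : ℕ) :
    sigma1 (q ^ (2 * a + 1)) = (q ^ (a + 1) + 1) * sigma1 (q ^ a) := by
  have h2 : (2 * a + 1) + 1 = (a + 1) + (a + 1) := by ring
  rw [sigma1_prime_pow hq, sigma1_prime_pow hq, h2, Finset.sum_range_add]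
  simp only [pow_add, ← Finset.mul_sum]
  ring

lemma key_dvd (n : ℕ) (hn : Superabundant n) (p : ℕ) (hp : p.Prime) (hpn : p ∣ n)
    (q j : ℕ) (hq : q.Prime) (hj : 0 < j) (hqjp : q ^ j ≤ p) : q ^ j ∣ n := by
  by_contra hnd
  have hn0 : n ≠ 0 := hn.1.ne'
  obtain ⟨a, ha⟩ : ∃ a, n.factorization q = a := ⟨_, rfl⟩
  obtain ⟨b, hbdef⟩ : ∃ b, n.factorization p = b := ⟨_, rfl⟩
  have hqa : q ^ a ∣ n := ha ▸ Nat.ordProj_dvd n q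
  have hpb : p ^ b ∣ n := hbdef ▸ Nat.ordProj_dvd n p
  have hb1 : 1 ≤ b := hbdef ▸ hp.factorization_pos_of_dvd hn0 hpn
  have haj : a + 1 ≤ j := by
    by_contra h
    exact hnd (dvd_trans (pow_dvd_pow q (by omega)) hqa)
  have hq1 : q ^ (a + 1) ≤ p :=
    le_trans (Nat.pow_le_pow_right hq.one_lt.le haj) hqjp
  have hqne : q ≠ p := by
    rintro rfl
    have h2 : q * q ≤ q ^ (a + 1) := by
      calc q * q = q ^ 2 := (sq q).symm
        _ ≤ q ^ (a + 1) := Nat.pow_le_pow_right hq.one_lt.le (by omega)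
    have h3 : q * q ≤ q := le_trans h2 hq1
    nlinarith [hq.two_le]
  have hqlt : q ^ (a + 1) < p := by
    rcases lt_or_eq_of_le hq1 with h | h
    · exact h
    · exact absurd ((Nat.prime_dvd_prime_iff_eq hq hp).mp
        (h ▸ dvd_pow_self q (Nat.succ_ne_zero a))) hqne
  -- decompose n = p^b * q^a * s
  have hcpq : Nat.Coprime p q := (Nat.coprime_primes hp hq).mpr (Ne.symm hqne)
  have hd : p ^ b * q ^ a ∣ n :=
    (hcpq.pow b a).mul_dvd_of_dvd_of_dvd hpb hqa
  obtain ⟨s, hns⟩ : ∃ s, n = p ^ b * q ^ a * s := ⟨n / (p ^ b * q ^ a),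
    (Nat.mul_div_cancel' hd).symm⟩
  have hs0 : 0 < s := by
    rcases Nat.eq_zero_or_pos s with h | h
    · rw [h, mul_zero] at hns; exact absurd hns hn0
    · exact h
  have hps : ¬ p ∣ s := by
    rintro ⟨t, rfl⟩
    refine Nat.pow_succ_factorization_not_dvd hn0 hp ?_
    rw [hbdef]
    exact ⟨q ^ a * t, by rw [hns]; ring⟩
  have hqs : ¬ q ∣ s := by
    rintro ⟨t, rfl⟩
    refine Nat.pow_succ_factorization_not_dvd hn0 hq ?_
    rw [ha]
    exact ⟨p ^ b * t, by rw [hns]; ring⟩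
  obtain ⟨b', rfl⟩ : ∃ b', b = b' + 1 := ⟨b - 1, by omega⟩
  -- the competitor m
  set m := p ^ b' * (q ^ (2 * a + 1) * s) with hm
  have hppos : 0 < p := hp.pos
  have hqpos : 0 < q := hq.pos
  have hm0 : 0 < m := by positivity
  have hns' : n = p ^ b' * (p * (q ^ a * s)) := by rw [hns]; ring
  have hmlt : m < n := by
    rw [hm, hns']
    have h1 : q ^ (2 * a + 1) * s = q ^ (a + 1) * (q ^ a * s) := by ring
    rw [h1]
    have h2 : q ^ (a + 1) * (q ^ a * s) < p * (q ^ a * s) :=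
      Nat.mul_lt_mul_of_pos_right hqlt (by positivity)
    exact mul_lt_mul_of_pos_left h2 (by positivity)
  -- sigma computations
  have hcps : Nat.Coprime p s := (Nat.Prime.coprime_iff_not_dvd hp).mpr hps
  have hcqs : Nat.Coprime q s := (Nat.Prime.coprime_iff_not_dvd hq).mpr hqs
  set A := sigma1 (p ^ b') with hA
  set B := sigma1 (q ^ a) with hB
  set C := sigma1 s with hC
  have hσn : sigma1 n = (p * A + 1) * (B * C) := by
    rw [hns', show p ^ b' * (p * (q ^ a * s)) = p ^ (b' + 1) * (q ^ a * s) by ring,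
      sigma1_mul (((hcpq.pow_right a).mul_right hcps).pow_left _),
      sigma1_mul (hcqs.pow_left _), sigma1_prime_pow_succ hp]
  have hσm : sigma1 m = A * ((q ^ (a + 1) + 1) * B * C) := by
    rw [hm, sigma1_mul (((hcpq.pow_right _).mul_right hcps).pow_left _),
      sigma1_mul (hcqs.pow_left _), sigma1_prime_pow_double hq]
  have hA1 : 1 ≤ A := sigma1_pos (by positivity)
  set Q := q ^ (a + 1) with hQ
  have hcore : (p * A + 1) * Q ≤ A * (Q + 1) * p := by nlinarith
  have hnat : sigma1 n * m ≤ sigma1 m * n := by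
    rw [hσn, hσm, hm, hns',
      show q ^ (2 * a + 1) = Q * q ^ a by rw [hQ]; ring]
    calc (p * A + 1) * (B * C) * (p ^ b' * (Q * q ^ a * s))
        = ((p * A + 1) * Q) * (B * C * (p ^ b' * (q ^ a * s))) := by ring
      _ ≤ (A * (Q + 1) * p) * (B * C * (p ^ b' * (q ^ a * s))) :=
          Nat.mul_le_mul_right _ hcore
      _ = A * ((Q + 1) * B * C) * (p ^ b' * (p * (q ^ a * s))) := by ring
  -- contradiction with superabundance
  have hlt := hn.2 m hm0 hmlt
  have hmr : (0:ℝ) < (m:ℝ) := by exact_mod_cast hm0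
  have hnr : (0:ℝ) < (n:ℝ) := by exact_mod_cast hn.1
  exact absurd hlt (not_lt.mpr (by
    rw [div_le_div_iff₀ hnr hmr]
    exact_mod_cast hnat))

theorem superabundant_chebyshev_psi_le_log
    (n : ℕ) (hn : Superabundant n) (p : ℕ) (hp : p.Prime) (hpn : p ∣ n)
    (hmax : ∀ q : ℕ, q.Prime → q ∣ n → q ≤ p) :
    ∑ k ∈ Finset.Icc 1 p, ArithmeticFunction.vonMangoldt k ≤ Real.log n := by
  classical
  have hn0 : n ≠ 0 := hn.1.ne'
  have hsub : (Finset.Icc 1 p).filter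
      (fun k => ArithmeticFunction.vonMangoldt k ≠ 0) ⊆ n.divisors := by
    intro k hk
    simp only [Finset.mem_filter, Finset.mem_Icc] at hk
    obtain ⟨⟨hk1, hkp⟩, hk0⟩ := hk
    obtain ⟨q, j, hq, hj, rfl⟩ :=
      (isPrimePow_nat_iff k).mp (ArithmeticFunction.vonMangoldt_ne_zero_iff.mp hk0)
    exact Nat.mem_divisors.mpr ⟨key_dvd n hn p hp hpn q j hq hj hkp, hn0⟩
  calc ∑ k ∈ Finset.Icc 1 p, ArithmeticFunction.vonMangoldt k
      = ∑ k ∈ (Finset.Icc 1 p).filter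
          (fun k => ArithmeticFunction.vonMangoldt k ≠ 0),
          ArithmeticFunction.vonMangoldt k := (Finset.sum_filter_ne_zero _).symm
    _ ≤ ∑ i ∈ n.divisors, ArithmeticFunction.vonMangoldt i :=
        Finset.sum_le_sum_of_subset_of_nonneg hsub
          (fun i _ _ => ArithmeticFunction.vonMangoldt_nonneg)
    _ = Real.log n := ArithmeticFunction.vonMangoldt_sum
end
end

section
/- Let n be a superabundant number with largest prime factor p ≥ 23. Then ∏_{q ≤ p, q prime} (1 − 1/q^{k_q+1}) > 1 − (1/log p)·(1 + 1.5/log p), where k_q is the exponent of q in n; consequently σ(n)/n > (1 − (1/log p)(1 + 1.5/log p)) · n/φ(n). -/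
open Real Finset

noncomputable section

/-! Write `σ(n)/n` as a product of the abundancies `(1 - q^{-(k+1)}) / (1 - q^{-1})` of the prime
powers `q^k ∥ n`. If `q ≠ p` and `q^{k_q+1} ≤ p`, then `q^{k_q+1} < p`, and replacing one factor
`p` of `n` by `q^{k_q+1}` gives a smaller number: the factor at `p` loses at most `1 + 1/p`, while
the factor at `q` gains exactly `1 + q^{-(k_q+1)} ≥ 1 + 1/p`, contradicting superabundance. So
`p < q^{k_q+1}` for every prime `q ≤ p` (in particular every such `q` divides `n`).

Then `∏ (1 - q^{-(k_q+1)}) ≥ 1 - ∑ q^{-(k_q+1)}`, and in the sum the primes `q ≤ √p` contribute at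
most `1/p` each and the others at most `1/q²`, for a total of at most `2/√p`. Since
`√p = exp(log p / 2) ≥ 1 + (log p)/2 + (log p)²/8 + (log p)³/48`, this is less than
`(1/log p)(1 + 1.5/log p)`. The bound on `σ(n)/n` follows from `n/φ(n) = ∏_{q ∣ n} (1 - 1/q)⁻¹`. -/

open scoped ArithmeticFunction.sigma

def abundancy (n : ℕ) : ℝ := sigma1 n / n

lemma sigma1_eq_sigma_one (n : ℕ) : sigma1 n = σ 1 n := by
  simp [sigma1, ArithmeticFunction.sigma_one_apply]

lemma abundancy_nonneg (n : ℕ) : 0 ≤ abundancy n := by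
  unfold abundancy; positivity

lemma abundancy_one : abundancy 1 = 1 := by
  simp [abundancy, sigma1]

lemma abundancy_mul {a b : ℕ} (h : a.Coprime b) :
    abundancy (a * b) = abundancy a * abundancy b := by
  simp only [abundancy, sigma1_eq_sigma_one,
    ArithmeticFunction.isMultiplicative_sigma.map_mul_of_coprime h]
  push_cast
  exact mul_div_mul_comm _ _ _ _

lemma abundancy_prime_pow {q : ℕ} (hq : q.Prime) (k : ℕ) :
    abundancy (q ^ k) = (1 - (q : ℝ)⁻¹ ^ (k + 1)) / (1 - (q : ℝ)⁻¹) := by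
  have hq1 : (1 : ℝ) < q := by exact_mod_cast hq.one_lt
  have hq0 : (q : ℝ) ≠ 0 := by positivity
  have hgeom := geom_sum_mul (q : ℝ) (k + 1)
  rw [abundancy, sigma1_eq_sigma_one, ArithmeticFunction.sigma_one_apply_prime_pow hq]
  push_cast
  rw [inv_pow, div_eq_div_iff (pow_ne_zero _ hq0) (sub_pos.mpr (inv_lt_one_of_one_lt₀ hq1)).ne']
  field_simp
  linear_combination (q : ℝ) ^ (k + 1) * hgeom

lemma one_add_inv_pow_mul_abundancy_prime_pow_sub {q : ℕ} (hq : q.Prime) (k j : ℕ) :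
    (1 + (q : ℝ)⁻¹ ^ j) * abundancy (q ^ k) - abundancy (q ^ (k + j)) =
      ((q : ℝ)⁻¹ ^ j - (q : ℝ)⁻¹ ^ (k + 1)) / (1 - (q : ℝ)⁻¹) := by
  have hq1 : (q : ℝ)⁻¹ < 1 := inv_lt_one_of_one_lt₀ (by exact_mod_cast hq.one_lt)
  rw [abundancy_prime_pow hq, abundancy_prime_pow hq]
  field_simp
  ring

lemma abundancy_prime_pow_add_le {q k j : ℕ} (hq : q.Prime) (hj : j ≤ k + 1) :
    abundancy (q ^ (k + j)) ≤ (1 + (q : ℝ)⁻¹ ^ j) * abundancy (q ^ k) := by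
  have hq1 : (q : ℝ)⁻¹ < 1 := inv_lt_one_of_one_lt₀ (by exact_mod_cast hq.one_lt)
  rw [← sub_nonneg, one_add_inv_pow_mul_abundancy_prime_pow_sub hq]
  exact div_nonneg (sub_nonneg.mpr (pow_le_pow_of_le_one (by positivity) hq1.le hj))
    (sub_nonneg.mpr hq1.le)

lemma le_abundancy_prime_pow_add {q k j : ℕ} (hq : q.Prime) (hj : k + 1 ≤ j) :
    (1 + (q : ℝ)⁻¹ ^ j) * abundancy (q ^ k) ≤ abundancy (q ^ (k + j)) := by
  have hq1 : (q : ℝ)⁻¹ < 1 := inv_lt_one_of_one_lt₀ (by exact_mod_cast hq.one_lt)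
  rw [← sub_nonpos, one_add_inv_pow_mul_abundancy_prime_pow_sub hq]
  exact div_nonpos_of_nonpos_of_nonneg
    (sub_nonpos.mpr (pow_le_pow_of_le_one (by positivity) hq1.le hj)) (sub_nonneg.mpr hq1.le)

lemma abundancy_prime_pow_mul {q c : ℕ} (hq : q.Prime) (hc : c ≠ 0) (j : ℕ) :
    abundancy (q ^ j * c) =
      abundancy (q ^ (c.factorization q + j)) * abundancy (ordCompl[q] c) := by
  conv_lhs => rw [← Nat.ordProj_mul_ordCompl_eq_self c q]
  rw [← mul_assoc, ← pow_add, add_comm j, abundancy_mul]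
  exact (Nat.coprime_ordCompl hq hc).pow_left _

lemma abundancy_prime_mul_le {p c : ℕ} (hp : p.Prime) (hc : c ≠ 0) :
    abundancy (p * c) ≤ (1 + (p : ℝ)⁻¹) * abundancy c := by
  have h₀ := abundancy_prime_pow_mul hp hc 0
  have h₁ := abundancy_prime_pow_mul hp hc 1
  rw [pow_zero, one_mul, add_zero] at h₀
  rw [pow_one] at h₁
  rw [h₀, h₁, ← mul_assoc]
  gcongr
  · exact abundancy_nonneg _
  · simpa using abundancy_prime_pow_add_le (j := 1) hp (by omega)

lemma one_add_inv_pow_mul_abundancy_le {q c j : ℕ} (hq : q.Prime) (hc : c ≠ 0)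
    (hj : c.factorization q < j) :
    (1 + (q : ℝ)⁻¹ ^ j) * abundancy c ≤ abundancy (q ^ j * c) := by
  have h₀ := abundancy_prime_pow_mul hq hc 0
  rw [pow_zero, one_mul, add_zero] at h₀
  rw [h₀, abundancy_prime_pow_mul hq hc j, ← mul_assoc]
  gcongr
  · exact abundancy_nonneg _
  · exact le_abundancy_prime_pow_add hq hj

lemma Superabundant.lt_pow_factorization_succ {n p q : ℕ} (hn : Superabundant n)
    (hp : p.Prime) (hpn : p ∣ n) (hq : q.Prime) : p < q ^ (n.factorization q + 1) := by
  have hn0 : n ≠ 0 := hn.1.ne'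
  obtain rfl | hqp := eq_or_ne q p
  · have hk := hq.factorization_pos_of_dvd hn0 hpn
    calc q < q ^ 2 := lt_self_pow₀ hq.one_lt (by norm_num)
      _ ≤ q ^ (n.factorization q + 1) := Nat.pow_le_pow_right hq.pos (by omega)
  by_contra! hle
  set k := n.factorization q with hk
  have hlt : q ^ (k + 1) < p := hle.lt_of_ne fun h =>
    hqp ((Nat.prime_dvd_prime_iff_eq hq hp).mp (h ▸ dvd_pow_self q k.succ_ne_zero))
  obtain ⟨c, rfl⟩ := hpn
  have hc0 : c ≠ 0 := right_ne_zero_of_mul hn0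
  have hkc : c.factorization q = k := by
    simp [hk, Nat.factorization_mul hp.ne_zero hc0, hp.factorization, hqp.symm]
  have hmn : q ^ (k + 1) * c < p * c := Nat.mul_lt_mul_of_pos_right hlt (Nat.pos_of_ne_zero hc0)
  have hgain : abundancy (p * c) ≤ abundancy (q ^ (k + 1) * c) :=
    calc abundancy (p * c) ≤ (1 + (p : ℝ)⁻¹) * abundancy c := abundancy_prime_mul_le hp hc0
      _ ≤ (1 + (q : ℝ)⁻¹ ^ (k + 1)) * abundancy c := by
        gcongr
        · exact abundancy_nonneg _
        rw [inv_pow]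
        exact inv_anti₀ (pow_pos (by exact_mod_cast hq.pos) _) (by exact_mod_cast hle)
      _ ≤ abundancy (q ^ (k + 1) * c) := one_add_inv_pow_mul_abundancy_le hq hc0 (by omega)
  exact hgain.not_gt (hn.2 _ (Nat.mul_pos (pow_pos hq.pos _) (Nat.pos_of_ne_zero hc0)) hmn)

lemma abundancy_eq_prod_mul_div_totient {n : ℕ} (hn : n ≠ 0) :
    abundancy n = (∏ q ∈ n.primeFactors, (1 - 1 / (q : ℝ) ^ (n.factorization q + 1))) *
      (n / n.totient) := by
  have hφ : (n.totient : ℝ) = n * ∏ q ∈ n.primeFactors, (1 - (q : ℝ)⁻¹) := by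
    have := congrArg (Rat.cast (K := ℝ)) (Nat.totient_eq_mul_prod_factors n)
    push_cast at this
    exact this
  rw [Nat.multiplicative_factorization abundancy (fun _ _ => abundancy_mul) abundancy_one hn,
    Finsupp.prod, Nat.support_factorization, hφ, div_mul_eq_div_div,
    div_self (by exact_mod_cast hn), one_div, ← prod_inv_distrib, ← prod_mul_distrib]
  refine prod_congr rfl fun q hq => ?_
  rw [abundancy_prime_pow (Nat.prime_of_mem_primeFactors hq), one_div, inv_pow, div_eq_mul_inv]

lemma Superabundant.primeFactors_eq {n p : ℕ} (hn : Superabundant n) (hp : p.Prime) (hpn : p ∣ n)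
    (hmax : ∀ q : ℕ, q.Prime → q ∣ n → q ≤ p) :
    n.primeFactors = (range (p + 1)).filter Nat.Prime := by
  ext q
  simp only [mem_filter, mem_range, Nat.mem_primeFactors, Nat.lt_succ_iff]
  refine ⟨fun ⟨hq, hqn, _⟩ => ⟨hmax q hq hqn, hq⟩, fun ⟨hqp, hq⟩ => ⟨hq, ?_, hn.1.ne'⟩⟩
  by_contra hqn
  have := hn.lt_pow_factorization_succ hp hpn hq
  rw [Nat.factorization_eq_zero_of_not_dvd hqn, zero_add, pow_one] at this
  omega

lemma one_sub_sum_le_prod_one_sub {R ι : Type*} [CommRing R] [LinearOrder R] [IsStrictOrderedRing R]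
    {s : Finset ι} {f : ι → R} (h0 : ∀ i ∈ s, 0 ≤ f i) (h1 : ∀ i ∈ s, f i ≤ 1) :
    1 - ∑ i ∈ s, f i ≤ ∏ i ∈ s, (1 - f i) := by
  induction s using Finset.cons_induction with
  | empty => simp
  | cons a s ha ih =>
    rw [prod_cons, sum_cons]
    have ih' := ih (fun i hi => h0 i (mem_cons_of_mem hi)) (fun i hi => h1 i (mem_cons_of_mem hi))
    have ha0 := h0 a (mem_cons_self a s)
    have ha1 := h1 a (mem_cons_self a s)
    have hs := sum_nonneg fun i hi => h0 i (mem_cons_of_mem hi)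
    nlinarith [mul_le_mul_of_nonneg_left ih' (sub_nonneg.mpr ha1), mul_nonneg ha0 hs]

lemma sub_one_div_sq_add_inv_sub_inv_sq_le {x s : ℝ} (hx : 2 ≤ x) (hsx : s ≤ x) (hxs : x < s + 1) :
    (s - 1) / x ^ 2 + (s⁻¹ - (x ^ 2)⁻¹) ≤ 2 / x := by
  have h₁ : (s - 1) / x ^ 2 ≤ (x - 1) / x ^ 2 := by gcongr
  have h₂ : s⁻¹ ≤ (x - 1)⁻¹ := inv_anti₀ (by linarith) (by linarith)
  have h₃ : 2 / x - ((x - 1) / x ^ 2 + ((x - 1)⁻¹ - (x ^ 2)⁻¹)) = (x - 2) / (x ^ 2 * (x - 1)) := by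
    have : x - 1 ≠ 0 := by linarith
    field_simp
    ring
  have h₄ : 0 ≤ (x - 2) / (x ^ 2 * (x - 1)) :=
    div_nonneg (by linarith) (mul_nonneg (by positivity) (by linarith))
  linarith

lemma sum_inv_pow_succ_le_two_div_sqrt {p : ℕ} (hp : 4 ≤ p) {f : ℕ → ℕ}
    (hf : ∀ q, q.Prime → q ≤ p → p < q ^ (f q + 1)) :
    ∑ q ∈ (range (p + 1)).filter Nat.Prime, 1 / (q : ℝ) ^ (f q + 1) ≤ 2 / √p := by
  set s := Nat.sqrt p
  set P := (range (p + 1)).filter Nat.Prime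
  have hmem : ∀ q ∈ P, q.Prime ∧ q ≤ p := fun q hq => by
    simp only [P, mem_filter, mem_range, Nat.lt_succ_iff] at hq
    exact ⟨hq.2, hq.1⟩
  have hs2 : 2 ≤ s := Nat.le_sqrt.mpr (by omega)
  have hsmall : ∑ q ∈ P.filter (· ≤ s), 1 / (q : ℝ) ^ (f q + 1) ≤ (s - 1) / p := by
    calc ∑ q ∈ P.filter (· ≤ s), 1 / (q : ℝ) ^ (f q + 1)
        ≤ ∑ q ∈ P.filter (· ≤ s), 1 / (p : ℝ) := sum_le_sum fun q hq => by
          obtain ⟨hq, hqp⟩ := hmem q (mem_filter.mp hq).1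
          gcongr
          exact_mod_cast (hf q hq hqp).le
      _ ≤ ∑ q ∈ Ioc 1 s, 1 / (p : ℝ) := sum_le_sum_of_subset_of_nonneg
          (fun q hq => mem_Ioc.mpr ⟨(hmem q (mem_filter.mp hq).1).1.one_lt, (mem_filter.mp hq).2⟩)
          (fun _ _ _ => by positivity)
      _ = (s - 1) / p := by
          rw [sum_const, Nat.card_Ioc, nsmul_eq_mul, Nat.cast_sub (by omega)]
          ring
  have hlarge : ∑ q ∈ P.filter (¬ · ≤ s), 1 / (q : ℝ) ^ (f q + 1) ≤ (s : ℝ)⁻¹ - (p : ℝ)⁻¹ := by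
    calc ∑ q ∈ P.filter (¬ · ≤ s), 1 / (q : ℝ) ^ (f q + 1)
        ≤ ∑ q ∈ P.filter (¬ · ≤ s), ((q : ℝ) ^ 2)⁻¹ := sum_le_sum fun q hq => by
          obtain ⟨hq, hqp⟩ := hmem q (mem_filter.mp hq).1
          have hfq : f q ≠ 0 := fun h => by
            have := hf q hq hqp
            rw [h, zero_add, pow_one] at this
            omega
          rw [one_div]
          exact inv_anti₀ (pow_pos (by exact_mod_cast hq.pos) 2)
            (pow_le_pow_right₀ (by exact_mod_cast hq.one_lt.le) (by omega))
      _ ≤ ∑ q ∈ Ioc s p, ((q : ℝ) ^ 2)⁻¹ := sum_le_sum_of_subset_of_nonneg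
          (fun q hq =>
            mem_Ioc.mpr ⟨not_le.mp (mem_filter.mp hq).2, (hmem q (mem_filter.mp hq).1).2⟩)
          (fun _ _ _ => by positivity)
      _ ≤ (s : ℝ)⁻¹ - (p : ℝ)⁻¹ := sum_Ioc_inv_sq_le_sub (by omega) (Nat.sqrt_le_self p)
  have hsq : √(p : ℝ) ^ 2 = p := sq_sqrt (Nat.cast_nonneg p)
  have hx : 2 ≤ √(p : ℝ) := by
    rw [show (2 : ℝ) = √4 by rw [show (4 : ℝ) = 2 ^ 2 by norm_num, sqrt_sq zero_le_two]]
    exact sqrt_le_sqrt (by exact_mod_cast hp)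
  have key := sub_one_div_sq_add_inv_sub_inv_sq_le hx Real.nat_sqrt_le_real_sqrt
    Real.real_sqrt_lt_nat_sqrt_succ
  rw [hsq] at key
  rw [← sum_filter_add_sum_filter_not P (· ≤ s)]
  linarith

lemma two_mul_sq_lt_exp_half_mul {L : ℝ} (hL : 0 ≤ L) : 2 * L ^ 2 < exp (L / 2) * (L + 1.5) := by
  have htaylor : 1 + L / 2 + L ^ 2 / 8 + L ^ 3 / 48 ≤ exp (L / 2) := by
    have := sum_le_exp_of_nonneg (by positivity : 0 ≤ L / 2) 4
    norm_num [sum_range_succ, Nat.factorial] at this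
    linarith
  nlinarith [mul_le_mul_of_nonneg_right htaylor (by positivity : (0 : ℝ) ≤ L + 1.5),
    sq_nonneg (L - 3), mul_nonneg hL (sq_nonneg (L - 3)), sq_nonneg (L ^ 2 - 9)]

lemma two_div_sqrt_lt_inv_log_mul {x : ℝ} (hx : 1 < x) :
    2 / √x < 1 / log x * (1 + 1.5 / log x) := by
  have hL : 0 < log x := log_pos hx
  have hsqrt : √x = exp (log x / 2) := by
    rw [sqrt_eq_rpow, rpow_def_of_pos (by linarith)]
    ring_nf
  have hrhs : 1 / log x * (1 + 1.5 / log x) = (log x + 1.5) / log x ^ 2 := by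
    field_simp
  rw [hsqrt, hrhs, div_lt_div_iff₀ (exp_pos _) (by positivity)]
  linarith [two_mul_sq_lt_exp_half_mul hL.le]

lemma one_sub_inv_log_mul_lt_prod {p : ℕ} (hp : 4 ≤ p) {f : ℕ → ℕ}
    (hf : ∀ q, q.Prime → q ≤ p → p < q ^ (f q + 1)) :
    1 - 1 / log p * (1 + 1.5 / log p) <
      ∏ q ∈ (range (p + 1)).filter Nat.Prime, (1 - 1 / (q : ℝ) ^ (f q + 1)) :=
  calc 1 - 1 / log p * (1 + 1.5 / log p) < 1 - 2 / √p := by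
        linarith [two_div_sqrt_lt_inv_log_mul (x := p) (by exact_mod_cast (by omega : 1 < p))]
    _ ≤ 1 - ∑ q ∈ (range (p + 1)).filter Nat.Prime, 1 / (q : ℝ) ^ (f q + 1) := by
        linarith [sum_inv_pow_succ_le_two_div_sqrt hp hf]
    _ ≤ ∏ q ∈ (range (p + 1)).filter Nat.Prime, (1 - 1 / (q : ℝ) ^ (f q + 1)) :=
        one_sub_sum_le_prod_one_sub (fun _ _ => by positivity) fun q hq =>
          div_le_one_of_le₀ (one_le_pow₀ (by exact_mod_cast (mem_filter.mp hq).2.one_lt.le))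
            (by positivity)

theorem superabundant_product_bound
    (n : ℕ) (hn : Superabundant n) (p : ℕ) (hp : p.Prime) (hpn : p ∣ n)
    (hmax : ∀ q : ℕ, q.Prime → q ∣ n → q ≤ p) (hp23 : 23 ≤ p) :
    (∏ q ∈ (Finset.range (p + 1)).filter Nat.Prime,
        (1 - 1 / (q : ℝ) ^ (n.factorization q + 1)) >
      1 - (1 / Real.log p) * (1 + 1.5 / Real.log p)) ∧
    (sigma1 n : ℝ) / n >
      (1 - (1 / Real.log p) * (1 + 1.5 / Real.log p)) * ((n : ℝ) / n.totient) := by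
  have hprod := one_sub_inv_log_mul_lt_prod (by omega : 4 ≤ p)
    fun q hq _ => hn.lt_pow_factorization_succ hp hpn hq
  refine ⟨hprod, ?_⟩
  change _ < abundancy n
  rw [abundancy_eq_prod_mul_div_totient hn.1.ne', hn.primeFactors_eq hp hpn hmax]
  exact mul_lt_mul_of_pos_right hprod
    (div_pos (by exact_mod_cast hn.1) (by exact_mod_cast Nat.totient_pos.mpr hn.1))

end
end
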